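/- Let B ⊆ ℕ⁺ be the set of positive integers whose base-3 expansion contains no digit equal to 1, and let g be the completely multiplicative {−1,+1}-valued function with g(n) = +1 iff the 3-free part of n is ≡ 1 mod 3. Then for every k ∈ B and every d ≥ 1, ∑_{i=1}^{k} g(i·d) = 0. Hence B is a balanceable set. -/
import Mathlib


open Finset

/-- The completely multiplicative function `g : ℕ⁺ → {-1,+1}` with `g(n) = +1` iff the
`3`-free part of `n` is `≡ 1 (mod 3)`. -/
def gThree (n : ℕ) : ℤ := if (n / 3 ^ (n.factorization 3)) % 3 = 1 then 1 else -1

lemma ord_compl_mod (n : ℕ) (hn : n ≠ 0) :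
    (n / 3 ^ n.factorization 3) % 3 = 1 ∨ (n / 3 ^ n.factorization 3) % 3 = 2 := by
  have h := Nat.not_dvd_ordCompl (by norm_num : Nat.Prime 3) hn
  have hne : (n / 3 ^ n.factorization 3) % 3 ≠ 0 :=
    fun h0 => h (Nat.dvd_of_mod_eq_zero h0)
  have hlt := Nat.mod_lt (n / 3 ^ n.factorization 3) (show 0 < 3 by norm_num)
  omega

lemma gThree_mul (a b : ℕ) (ha : a ≠ 0) (hb : b ≠ 0) :
    gThree (a * b) = gThree a * gThree b := by
  have hm : (a * b) / 3 ^ (a * b).factorization 3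
      = (a / 3 ^ a.factorization 3) * (b / 3 ^ b.factorization 3) :=
    Nat.ordCompl_mul a b 3
  rcases ord_compl_mod a ha with h1 | h1 <;> rcases ord_compl_mod b hb with h2 | h2 <;>
    rw [gThree, gThree, gThree, hm, Nat.mul_mod, h1, h2] <;> norm_num

lemma gThree_of_mod (n : ℕ) (hn : n % 3 ≠ 0) :
    gThree n = if n % 3 = 1 then 1 else -1 := by
  have h : ¬ (3 ∣ n) := by omega
  rw [gThree, Nat.factorization_eq_zero_of_not_dvd h]
  simp

lemma gThree_three : gThree 3 = 1 := by
  have h : (3 : ℕ).factorization 3 = 1 := by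
    rw [Nat.Prime.factorization (by norm_num)]; simp
  rw [gThree, h]; norm_num

lemma gThree_three_mul (m : ℕ) (hm : m ≠ 0) : gThree (3 * m) = gThree m := by
  rw [gThree_mul 3 m (by norm_num) hm, gThree_three, one_mul]

lemma S_three (k : ℕ) :
    ∑ i ∈ Finset.Icc 1 (3 * k), gThree i = ∑ i ∈ Finset.Icc 1 k, gThree i := by
  induction k with
  | zero => simp
  | succ n ih =>
    have h3 : 3 * (n + 1) = (3 * n + 2) + 1 := by ring
    rw [h3, Finset.sum_Icc_succ_top (by omega), Finset.sum_Icc_succ_top (by omega),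
      Finset.sum_Icc_succ_top (by omega), ih, Finset.sum_Icc_succ_top (by omega)]
    have e1 : gThree (3 * n + 1) = 1 := by
      rw [gThree_of_mod _ (by omega)]
      have : (3 * n + 1) % 3 = 1 := by omega
      simp [this]
    have e2 : gThree (3 * n + 2) = -1 := by
      rw [gThree_of_mod _ (by omega)]
      have : (3 * n + 2) % 3 = 2 := by omega
      simp [this]
    have e3 : gThree (3 * n + 2 + 1) = gThree (n + 1) := by
      have : 3 * n + 2 + 1 = 3 * (n + 1) := by ring
      rw [this, gThree_three_mul _ (by omega)]
    rw [e1, e2, e3]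
    ring

lemma sum_g_zero : ∀ k : ℕ, (1 : ℕ) ∉ Nat.digits 3 k →
    ∑ i ∈ Finset.Icc 1 k, gThree i = 0 := by
  intro k
  induction k using Nat.strong_induction_on with
  | _ k ih =>
    intro hk
    rcases Nat.eq_zero_or_pos k with rfl | hpos
    · simp
    have hd : Nat.digits 3 k = k % 3 :: Nat.digits 3 (k / 3) :=
      Nat.digits_def' (by norm_num) hpos
    rw [hd] at hk
    simp only [List.mem_cons, not_or] at hk
    obtain ⟨h1, h2⟩ := hk
    have hq : k / 3 < k := Nat.div_lt_self hpos (by norm_num)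
    have hS := ih (k / 3) hq h2
    have hlt : k % 3 < 3 := Nat.mod_lt k (by norm_num)
    have hmod : k % 3 = 0 ∨ k % 3 = 2 := by omega
    rcases hmod with h | h
    · have hk3 : k = 3 * (k / 3) := by omega
      rw [hk3, S_three]; exact hS
    · have hk3 : k = 3 * (k / 3) + 2 := by omega
      set q := k / 3 with hqdef
      rw [hk3]
      have h21 : 3 * q + 2 = (3 * q + 1) + 1 := by ring
      rw [h21, Finset.sum_Icc_succ_top (by omega), Finset.sum_Icc_succ_top (by omega),
        S_three, hS]
      have e1 : gThree (3 * q + 1) = 1 := by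
        rw [gThree_of_mod _ (by omega)]
        have : (3 * q + 1) % 3 = 1 := by omega
        simp [this]
      have e2 : gThree (3 * q + 1 + 1) = -1 := by
        rw [gThree_of_mod _ (by omega)]
        have : (3 * q + 1 + 1) % 3 = 2 := by omega
        simp [this]
      rw [e1, e2]
      ring

/-- If `k` is a positive integer whose base-3 expansion contains no digit `1`, then for
every `d ≥ 1` the sum of `g` over the cascade `{d, 2d, …, kd}` is zero; hence the set of
such `k` is balanceable (witnessed by `g` and the constant `C = 0 ≤ 1`). -/
theorem balanceable_no_ones_ternary :
    ∀ k : ℕ, 1 ≤ k → (1 : ℕ) ∉ Nat.digits 3 k →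
      ∀ d : ℕ, 1 ≤ d → ∑ i ∈ Finset.Icc 1 k, gThree (i * d) = 0 := by
  intro k hk h1 d hd
  have hrw : ∀ i ∈ Finset.Icc 1 k, gThree (i * d) = gThree i * gThree d := by
    intro i hi
    simp only [Finset.mem_Icc] at hi
    exact gThree_mul i d (by omega) (by omega)
  rw [Finset.sum_congr rfl hrw, ← Finset.sum_mul, sum_g_zero k h1, zero_mul]
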